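/- Let (X,d_X) and (Y,d_Y) be V-categories and i : (Y,d_Y) → (X,d_X) an isometry (d_Y(y₁,y₂) = d_X(i(y₁), i(y₂)) for all y₁,y₂). Then every non-expansive map f : (Y,d_Y) → (V,d_V) factors as f = g ∘ i for some non-expansive g : (X,d_X) → (V,d_V). -/

import Mathlib

variable {V : Type*}

/-- Residuation (internal hom) of a quantale. -/
def dres [CommMonoid V] [CompleteLattice V] (a c : V) : V := sSup {u | u * a ≤ c}

section Residuation

variable [CommMonoid V] [CompleteLattice V] [IsQuantale V]

lemma le_dres_iff {u a c : V} : u ≤ dres a c ↔ u * a ≤ c := by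
  refine ⟨fun h => ?_, fun h => le_sSup h⟩
  calc u * a ≤ dres a c * a := mul_le_mul_left h a
    _ = ⨆ v ∈ {v | v * a ≤ c}, v * a := sSup_mul_distrib
    _ ≤ c := iSup₂_le fun _ hv => hv

end Residuation

section KanExtension

variable [CommMonoid V] [CompleteLattice V] [IsQuantale V] {X Y : Type*}

/-- The left Kan extension of `f : Y → V` along `i : Y → X`. -/
def lanExtend (dX : X → X → V) (i : Y → X) (f : Y → V) (x : X) : V :=
  ⨆ y, f y * dX (i y) x

lemma lanExtend_nonexpansive {dX : X → X → V} (hXtrans : ∀ x y z, dX x y * dX y z ≤ dX x z)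
    (i : Y → X) (f : Y → V) (x₁ x₂ : X) :
    dX x₁ x₂ ≤ dres (lanExtend dX i f x₁) (lanExtend dX i f x₂) := by
  rw [le_dres_iff, lanExtend, Quantale.mul_iSup_distrib]
  refine iSup_le fun y => le_iSup_of_le y ?_
  calc dX x₁ x₂ * (f y * dX (i y) x₁) = f y * (dX (i y) x₁ * dX x₁ x₂) := by
        rw [mul_comm, mul_assoc]
    _ ≤ f y * dX (i y) x₂ := mul_le_mul_right (hXtrans _ _ _) _

lemma lanExtend_comp {dX : X → X → V} (hXrefl : ∀ x, (1 : V) ≤ dX x x) {i : Y → X} {f : Y → V}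
    (hf : ∀ y₁ y₂, dX (i y₁) (i y₂) ≤ dres (f y₁) (f y₂)) (y : Y) :
    lanExtend dX i f (i y) = f y := by
  refine le_antisymm (iSup_le fun y' => ?_) (le_iSup_of_le y ?_)
  · rw [mul_comm, ← le_dres_iff]
    exact hf y' y
  · calc f y = f y * 1 := (mul_one _).symm
      _ ≤ f y * dX (i y) (i y) := mul_le_mul_right (hXrefl _) _

end KanExtension

theorem stmt12_general [CommMonoid V] [CompleteLattice V] [IsQuantale V]
    {X Y : Type*} (dX : X → X → V) (dY : Y → Y → V)
    (hXrefl : ∀ x, (1 : V) ≤ dX x x)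
    (hXtrans : ∀ x y z, dX x y * dX y z ≤ dX x z)
    (i : Y → X) (hiso : ∀ y₁ y₂, dY y₁ y₂ = dX (i y₁) (i y₂))
    (f : Y → V) (hf : ∀ y₁ y₂, dY y₁ y₂ ≤ dres (f y₁) (f y₂)) :
    ∃ g : X → V, (∀ x₁ x₂, dX x₁ x₂ ≤ dres (g x₁) (g x₂)) ∧ ∀ y, f y = g (i y) :=
  ⟨lanExtend dX i f, lanExtend_nonexpansive hXtrans i f,
    fun y => (lanExtend_comp hXrefl (fun y₁ y₂ => hiso y₁ y₂ ▸ hf y₁ y₂) y).symm⟩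

/-- Non-expansive maps into `(V, dres)` extend along isometries of V-categories. -/
theorem stmt12 [CommMonoid V] [CompleteLattice V] [IsQuantale V]
    {X Y : Type*} (dX : X → X → V) (dY : Y → Y → V)
    (hXrefl : ∀ x, (1 : V) ≤ dX x x)
    (hXtrans : ∀ x y z, dX x y * dX y z ≤ dX x z)
    (hYrefl : ∀ y, (1 : V) ≤ dY y y)
    (hYtrans : ∀ x y z, dY x y * dY y z ≤ dY x z)
    (i : Y → X) (hiso : ∀ y₁ y₂, dY y₁ y₂ = dX (i y₁) (i y₂))
    (f : Y → V) (hf : ∀ y₁ y₂, dY y₁ y₂ ≤ dres (f y₁) (f y₂)) :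
    ∃ g : X → V, (∀ x₁ x₂, dX x₁ x₂ ≤ dres (g x₁) (g x₂)) ∧ ∀ y, f y = g (i y) :=
  stmt12_general dX dY hXrefl hXtrans i hiso f hf
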